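/- Let A, B be bounded linear operators on a complex Hilbert space H. If the range of A is contained in the range of B, then there exists a bounded linear operator C on H such that A = BC. -/

import Mathlib

/-!
Restricted to `(ker B)ᗮ`, the operator `B` becomes injective without losing any of its range.
For an injective `B` with `R(A) ⊆ R(B)`, the map `C = B⁻¹ ∘ A` is linear, and its graph
`{(x, y) | B y = A x}` is closed, so `C` is bounded by the closed graph theorem.
-/

open ContinuousLinearMap

namespace ContinuousLinearMap

section ClosedGraph

variable {𝕜 E F G : Type*} [NontriviallyNormedField 𝕜]
  [NormedAddCommGroup E] [NormedSpace 𝕜 E] [CompleteSpace E]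
  [NormedAddCommGroup F] [NormedSpace 𝕜 F] [CompleteSpace F]
  [AddCommGroup G] [Module 𝕜 G] [TopologicalSpace G] [T2Space G]

theorem exists_eq_comp_of_range_subset_of_injective (A : E →L[𝕜] G) (B : F →L[𝕜] G)
    (hB : Function.Injective B) (h : Set.range A ⊆ Set.range B) :
    ∃ C : E →L[𝕜] F, A = B ∘L C := by
  let C : E →ₗ[𝕜] F :=
    LinearMap.codRestrictOfInjective (A : E →ₗ[𝕜] G) (B : F →ₗ[𝕜] G) hB fun x => h ⟨x, rfl⟩
  have hBC : ∀ x, B (C x) = A x := LinearMap.codRestrictOfInjective_comp_apply _ _ hB _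
  have hgraph : (C.graph : Set (E × F)) = {p | B p.2 = A p.1} := by
    ext ⟨x, y⟩
    simp only [SetLike.mem_coe, LinearMap.mem_graph_iff, Set.mem_ofPred_eq]
    exact ⟨fun hy => hy ▸ hBC x, fun hy => hB (hy.trans (hBC x).symm)⟩
  have hC : Continuous C := C.continuous_of_isClosed_graph <| hgraph ▸
    isClosed_eq (B.continuous.comp continuous_snd) (A.continuous.comp continuous_fst)
  exact ⟨⟨C, hC⟩, ext fun x => (hBC x).symm⟩

end ClosedGraph

section Orthogonal

variable {𝕜 E F : Type*} [RCLike 𝕜] [NormedAddCommGroup E] [InnerProductSpace 𝕜 E]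
  [AddCommGroup F] [Module 𝕜 F] [TopologicalSpace F]

theorem injective_comp_subtypeL_orthogonal_ker (B : E →L[𝕜] F) :
    Function.Injective (B ∘L B.kerᗮ.subtypeL) := by
  intro x y hxy
  have hker : (x - y : E) ∈ B.ker := by
    simpa [sub_eq_zero] using hxy
  have hperp : (x - y : E) ∈ B.kerᗮ := (x - y).2
  exact Subtype.ext <| sub_eq_zero.mp <| B.ker.orthogonal_disjoint.le_bot ⟨hker, hperp⟩

theorem range_comp_subtypeL_orthogonal_ker [CompleteSpace E] [T1Space F] (B : E →L[𝕜] F) :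
    Set.range (B ∘L B.kerᗮ.subtypeL) = Set.range B := by
  have : CompleteSpace B.ker := B.isClosed_ker.completeSpace_coe
  refine subset_antisymm (Set.range_subset_iff.2 fun x => ⟨x, rfl⟩) ?_
  rintro _ ⟨x, rfl⟩
  refine ⟨⟨x - B.ker.starProjection x, B.ker.sub_starProjection_mem_orthogonal x⟩, ?_⟩
  have : B (B.ker.starProjection x) = 0 := B.ker.starProjection_apply_mem x
  simp [this]

end Orthogonal

end ContinuousLinearMap

theorem douglas_range_subset_implies_factorization
    {H : Type*} [NormedAddCommGroup H] [InnerProductSpace ℂ H] [CompleteSpace H]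
    (A B : H →L[ℂ] H) (h : Set.range A ⊆ Set.range B) :
    ∃ C : H →L[ℂ] H, A = B ∘L C := by
  obtain ⟨C, hC⟩ := exists_eq_comp_of_range_subset_of_injective A _
    (injective_comp_subtypeL_orthogonal_ker B) (h.trans (range_comp_subtypeL_orthogonal_ker B).ge)
  exact ⟨B.kerᗮ.subtypeL ∘L C, hC⟩
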